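/- arXiv:1810.01613 — 8 statements merged into one kernel-verified Lean document; each statement's English description precedes it below -/
import Mathlib

section
/- For every m ≥ 2, the sequence j ↦ (j/(m-j))·(a_j/a_{j-1}) is decreasing in j for 1 ≤ j ≤ m-1, where a_j = a_{m-1,j} is the coefficient of x^j in Π_{r=1}^{m-1}(1 + x/r). Consequently the sequence j ↦ j·a_j/a_{j-1} is also decreasing. -/
/-!
The coefficients `a j` are the elementary symmetric functions `e_j` of `1, 1/2, …, 1/(m-1)`, and
the first claim is Newton's inequality `(j+1)(n-j+1) e_{j+1} e_{j-1} ≤ j(n-j) e_j²` for these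
`n = m - 1` positive numbers, divided through. Newton's inequality for positive reals is proved by
induction on the number of variables: adjoining a variable `t` replaces `e_k` by `e_k + t e_{k-1}`,
and the inequality at `k` for the enlarged family follows from the old ones at `k` and `k - 1` by
an explicit sum-of-squares identity. The second claim follows from the first because
`(m-j-1)/(m-j) ≤ 1`.
-/

open Finset

namespace Multiset

section CommSemiring

variable {R : Type*} [CommSemiring R]

@[simp]
theorem esymm_zero (s : Multiset R) : s.esymm 0 = 1 := by
  simp [esymm]

theorem esymm_eq_zero_of_card_lt {s : Multiset R} {k : ℕ} (h : card s < k) : s.esymm k = 0 := by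
  simp [esymm, powersetCard_eq_empty _ h]

theorem esymm_cons_succ (a : R) (s : Multiset R) (k : ℕ) :
    (a ::ₘ s).esymm (k + 1) = s.esymm (k + 1) + a * s.esymm k := by
  simp [esymm, map_map, sum_map_mul_left]

end CommSemiring

section OrderedSemiring

variable {R : Type*} [CommSemiring R] [PartialOrder R] {s : Multiset R}

theorem esymm_nonneg [IsOrderedRing R] (hs : ∀ a ∈ s, 0 ≤ a) (k : ℕ) : 0 ≤ s.esymm k :=
  sum_nonneg fun _ ht => by
    obtain ⟨u, hu, rfl⟩ := mem_map.1 ht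
    exact prod_nonneg fun a ha => hs a (mem_of_le (mem_powersetCard.1 hu).1 ha)

theorem esymm_pos [IsStrictOrderedRing R] (hs : ∀ a ∈ s, 0 < a) {k : ℕ} (hk : k ≤ card s) :
    0 < s.esymm k := by
  induction s using Multiset.induction_on generalizing k with
  | empty => simp_all
  | cons a s ih =>
    obtain _ | k := k
    · simp
    rw [esymm_cons_succ]
    have hs' : ∀ b ∈ s, 0 < b := fun b hb => hs b (mem_cons_of_mem hb)
    have := esymm_nonneg (fun b hb => (hs' b hb).le) (k + 1)
    have := ih hs' (k := k) (by simpa using hk)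
    have := hs a (mem_cons_self a s)
    positivity

end OrderedSemiring

end Multiset

theorem Finset.prod_one_add_mul_eq_sum_esymm {ι R : Type*} [CommSemiring R] (S : Finset ι)
    (f : ι → R) (x : R) :
    ∏ i ∈ S, (1 + f i * x) = ∑ j ∈ range (#S + 1), (S.val.map f).esymm j * x ^ j := by
  rw [prod_one_add, sum_powerset]
  refine sum_congr rfl fun j _ => ?_
  rw [Finset.esymm_map_val, sum_mul]
  refine sum_congr rfl fun t ht => ?_
  rw [prod_mul_distrib, prod_const, (mem_powersetCard.1 ht).2]

theorem eq_of_forall_sum_mul_pow_eq {R : Type*} [CommRing R] [IsDomain R] [Infinite R]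
    {a b : ℕ → R} {m : ℕ}
    (h : ∀ x, ∑ j ∈ range m, a j * x ^ j = ∑ j ∈ range m, b j * x ^ j) {j : ℕ} (hj : j < m) :
    a j = b j := by
  open Polynomial in
  have hpoly : ∑ i ∈ range m, C (a i) * X ^ i = ∑ i ∈ range m, C (b i) * X ^ i :=
    funext fun x => by simpa [eval_finsetSum] using h x
  simpa [finsetSum_coeff, coeff_C_mul, coeff_X_pow, hj] using congr_arg (coeff · j) hpoly

theorem eq_esymm_of_prod_one_add_div_eq_sum {m : ℕ} {a : ℕ → ℝ}
    (ha : ∀ x : ℝ, ∏ r ∈ Icc 1 (m - 1), (1 + x / r) = ∑ j ∈ range m, a j * x ^ j)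
    {j : ℕ} (hj : j < m) : a j = ((Icc 1 (m - 1)).val.map fun r : ℕ => (r : ℝ)⁻¹).esymm j := by
  refine eq_of_forall_sum_mul_pow_eq (fun x => ?_) hj
  rw [← ha x]
  simpa [inv_mul_eq_div, show m - 1 + 1 = m by omega] using
    prod_one_add_mul_eq_sum_esymm (Icc 1 (m - 1)) (fun r : ℕ => (r : ℝ)⁻¹) x

/- `p, q, r, s` stand for `e_{k-1}, e_k, e_{k+1}, e_{k+2}` of `n` variables, `h₁` and `h₀` are
Newton's inequality at `k` and `k - 1`, and the conclusion is Newton's inequality at `k` after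
adjoining the variable `t`. -/
theorem newton_inequality_step {k n p q r s t : ℝ} (hk : 0 ≤ k) (hkn : k + 1 ≤ n) (hp : 0 ≤ p)
    (hq : 0 < q) (hr : 0 < r) (ht : 0 ≤ t)
    (h₁ : (k + 2) * (n - k) * (s * q) ≤ (k + 1) * (n - k - 1) * r ^ 2)
    (h₀ : (k + 1) * (n - k + 1) * (r * p) ≤ k * (n - k) * q ^ 2) :
    (k + 2) * (n + 1 - k) * ((s + t * r) * (q + t * p)) ≤
      (k + 1) * (n + 1 - k - 1) * (r + t * q) ^ 2 := by
  have hnk₀ : 0 ≤ n - k - 1 := by linarith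
  have hnk₁ : 0 < n - k := by linarith
  have hnk₂ : 0 ≤ n - k + 1 := by linarith
  have hsp : (k + 2) * (n - k + 1) * (s * p) ≤ k * (n - k - 1) * (q * r) := by
    have := mul_le_mul h₁ h₀ (by positivity) (by positivity)
    refine le_of_mul_le_mul_left ?_ (by positivity : 0 < (k + 1) * (n - k) * (q * r))
    linear_combination this
  have key : ((k+1)*(n-k)*(r+t*q)^2 - (k+2)*(n+1-k)*((s+t*r)*(q+t*p))) * ((k+1)*(n-k))
      = (k+1)*(n-k+1) * ((k+1)*(n-k-1)*r^2 - (k+2)*(n-k)*(s*q))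
        + t*((k+1)*(n-k)) * (k*(n-k-1)*(q*r) - (k+2)*(n-k+1)*(s*p))
        + t^2*((k+2)*(n-k)) * (k*(n-k)*q^2 - (k+1)*(n-k+1)*(r*p))
        + ((k+1)*r - t*(n-k)*q)^2 := by ring
  have h₁' := sub_nonneg.2 h₁
  have h₀' := sub_nonneg.2 h₀
  have hsp' := sub_nonneg.2 hsp
  have hpos : 0 < (k + 1) * (n - k) := by positivity
  have : 0 ≤ ((k+1)*(n-k)*(r+t*q)^2 - (k+2)*(n+1-k)*((s+t*r)*(q+t*p))) * ((k+1)*(n-k)) := by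
    rw [key]
    positivity
  linarith [(mul_nonneg_iff_of_pos_right hpos).1 this]

namespace Multiset

variable {s : Multiset ℝ}

theorem esymm_add_two_mul_esymm_le_sq_of_card_le {k : ℕ} (hk : card s ≤ k + 1) :
    (k + 2) * (card s - k : ℝ) * (s.esymm (k + 2) * s.esymm k) ≤
      (k + 1) * (card s - k - 1 : ℝ) * s.esymm (k + 1) ^ 2 := by
  rw [esymm_eq_zero_of_card_lt (by omega : card s < k + 2), zero_mul, mul_zero]
  rcases hk.eq_or_lt with hk | hk
  · simp [hk]
  · rw [esymm_eq_zero_of_card_lt (by omega : card s < k + 1)]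
    simp

theorem esymm_add_two_mul_esymm_le_sq (hs : ∀ a ∈ s, 0 < a) (k : ℕ) :
    (k + 2) * (card s - k : ℝ) * (s.esymm (k + 2) * s.esymm k) ≤
      (k + 1) * (card s - k - 1 : ℝ) * s.esymm (k + 1) ^ 2 := by
  induction s using Multiset.induction_on generalizing k with
  | empty => exact esymm_add_two_mul_esymm_le_sq_of_card_le (by simp)
  | cons a s ih =>
    rcases le_or_gt (card (a ::ₘ s)) (k + 1) with hk | hk
    · exact esymm_add_two_mul_esymm_le_sq_of_card_le hk
    rw [card_cons] at hk
    have hs' : ∀ b ∈ s, 0 < b := fun b hb => hs b (mem_cons_of_mem hb)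
    have ha : 0 < a := hs a (mem_cons_self a s)
    have hkn : (k : ℝ) + 1 ≤ card s := by exact_mod_cast (by omega : k + 1 ≤ card s)
    have hq := esymm_pos hs' (k := k) (by omega)
    have hr := esymm_pos hs' (k := k + 1) (by omega)
    rw [card_cons, Nat.cast_succ, esymm_cons_succ, esymm_cons_succ]
    obtain _ | i := k
    · simp only [esymm_zero, Nat.cast_zero] at hq hr hkn ⊢
      have := newton_inequality_step le_rfl hkn le_rfl hq hr ha.le (by simpa using ih hs' 0)
        (by simp)
      linear_combination this
    · rw [esymm_cons_succ]
      have h₁ := ih hs' (i + 1)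
      have h₀ := ih hs' i
      push_cast at hq hr hkn h₁ h₀ ⊢
      have := newton_inequality_step (by positivity) hkn
        (esymm_nonneg (fun b hb => (hs' b hb).le) i) hq hr ha.le h₁ (by linear_combination h₀)
      linear_combination this

end Multiset

theorem le_of_div_le_div_add_one {u v d : ℝ} (hd : 0 < d) (hv : 0 ≤ v)
    (h : u / d ≤ v / (d + 1)) : u ≤ v := by
  rw [div_le_div_iff₀ hd (by linarith)] at h
  nlinarith

theorem stmt5_general (m : ℕ) (a : ℕ → ℝ)
    (ha : ∀ x : ℝ, ∏ r ∈ Finset.Icc 1 (m - 1), (1 + x / r) =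
      ∑ j ∈ Finset.range m, a j * x ^ j) :
    (∀ j : ℕ, 1 ≤ j → j + 1 ≤ m - 1 →
      ((j + 1 : ℝ) / (m - (j + 1))) * (a (j + 1) / a j) ≤
        ((j : ℝ) / (m - j)) * (a j / a (j - 1))) ∧
    (∀ j : ℕ, 1 ≤ j → j + 1 ≤ m - 1 →
      ((j : ℝ) + 1) * (a (j + 1) / a j) ≤ (j : ℝ) * (a j / a (j - 1))) := by
  set e : Multiset ℝ := (Icc 1 (m - 1)).val.map fun r : ℕ => (r : ℝ)⁻¹
  have he : ∀ x ∈ e, 0 < x := by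
    simp only [e, Multiset.mem_map, Finset.mem_val, Finset.mem_Icc]
    rintro _ ⟨r, ⟨hr, -⟩, rfl⟩
    positivity
  have hcard : Multiset.card e = m - 1 := by simp [e]
  have hae : ∀ j < m, a j = e.esymm j := fun j => eq_esymm_of_prod_one_add_div_eq_sum ha
  have hapos : ∀ j < m, 0 < a j := fun j hj => by
    rw [hae j hj]
    exact Multiset.esymm_pos he (by omega)
  have hratio : ∀ j : ℕ, 1 ≤ j → j + 1 ≤ m - 1 →
      ((j + 1 : ℝ) / (m - (j + 1))) * (a (j + 1) / a j) ≤
        ((j : ℝ) / (m - j)) * (a j / a (j - 1)) := by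
    intro j hj1 hj2
    obtain ⟨i, rfl⟩ := Nat.exists_eq_add_of_le' hj1
    have hnewton := Multiset.esymm_add_two_mul_esymm_le_sq he i
    have hm : (i : ℝ) + 3 ≤ m := by exact_mod_cast (by omega : i + 3 ≤ m)
    rw [hcard, Nat.cast_sub (by omega), ← hae i (by omega), ← hae (i + 1) (by omega),
      ← hae (i + 2) (by omega)] at hnewton
    rw [Nat.add_sub_cancel, div_mul_div_comm, div_mul_div_comm, div_le_div_iff₀
      (mul_pos (by push_cast; linarith) (hapos _ (by omega)))
      (mul_pos (by push_cast; linarith) (hapos _ (by omega)))]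
    push_cast at hnewton ⊢
    linear_combination hnewton
  refine ⟨hratio, fun j hj1 hj2 => ?_⟩
  have hj := hratio j hj1 hj2
  rw [div_mul_eq_mul_div, div_mul_eq_mul_div, show (m : ℝ) - j = m - (j + 1) + 1 by ring] at hj
  have hm : (j : ℝ) + 2 ≤ m := by exact_mod_cast (by omega : j + 2 ≤ m)
  exact le_of_div_le_div_add_one (by linarith)
    (mul_nonneg j.cast_nonneg (div_pos (hapos j (by omega)) (hapos _ (by omega))).le) hj

theorem stmt5 (m : ℕ) (hm : 2 ≤ m) (a : ℕ → ℝ)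
    (ha : ∀ x : ℝ, ∏ r ∈ Finset.Icc 1 (m - 1), (1 + x / r) =
      ∑ j ∈ Finset.range m, a j * x ^ j) :
    (∀ j : ℕ, 1 ≤ j → j + 1 ≤ m - 1 →
      ((j + 1 : ℝ) / (m - (j + 1))) * (a (j + 1) / a j) ≤
        ((j : ℝ) / (m - j)) * (a j / a (j - 1))) ∧
    (∀ j : ℕ, 1 ≤ j → j + 1 ≤ m - 1 →
      ((j : ℝ) + 1) * (a (j + 1) / a j) ≤ (j : ℝ) * (a j / a (j - 1))) :=
  stmt5_general m a ha
end

section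
/- For every m ≥ 2 and every 1 ≤ j ≤ m-1, a_j/a_{j-1} ≤ h_{m-1}/j, where a_j = a_{m-1,j} is the coefficient of x^j in Π_{r=1}^{m-1}(1 + x/r) and h_{m-1} = Σ_{r=1}^{m-1} 1/r. -/
/-!
The `a_k` are the elementary symmetric functions `e_k` of the numbers `1/r`, and
`a_0 = 1`, `a_1 = h_{m-1}`. The claim is the Newton-type inequality `j e_j ≤ e_1 e_{j-1}` for
nonnegative variables: expanding `e_1 e_{j-1}` term by term, every monomial of `e_j` appears
there `j` times, once for each choice of the variable that `e_1` contributes.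
-/

open Finset

variable {ι R : Type*} [DecidableEq ι] [CommSemiring R]

theorem card_mul_prod_eq_sum_mul_prod_erase (T : Finset ι) (f : ι → R) :
    (#T : R) * ∏ x ∈ T, f x = ∑ r ∈ T, f r * ∏ x ∈ T.erase r, f x := by
  rw [sum_congr rfl fun r hr => mul_prod_erase T f hr, sum_const, nsmul_eq_mul]

variable [PartialOrder R] [IsOrderedRing R]

/-- A `(j+1)`-subset `U` with a marked point `r ∈ U` is recovered from the pair
`(r, U.erase r)`, one of the index pairs of the expansion of `e₁ eⱼ`. -/
theorem succ_mul_sum_powersetCard_succ_le (s : Finset ι) (f : ι → R) (hf : ∀ r ∈ s, 0 ≤ f r)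
    (j : ℕ) :
    ((j : R) + 1) * ∑ U ∈ s.powersetCard (j + 1), ∏ x ∈ U, f x ≤
      (∑ r ∈ s, f r) * ∑ T ∈ s.powersetCard j, ∏ x ∈ T, f x := by
  set D := (s.powersetCard (j + 1)).sigma fun U => U
  let e : (Σ _ : Finset ι, ι) → ι × Finset ι := fun p => (p.2, p.1.erase p.2)
  let g : ι × Finset ι → R := fun q => f q.1 * ∏ x ∈ q.2, f x
  have hinj : Set.InjOn e D := by
    rintro ⟨U, r⟩ hp ⟨U', r'⟩ hp' heq
    simp only [e, Prod.mk.injEq] at heq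
    obtain ⟨rfl, hUU'⟩ := heq
    simp only [D, coe_sigma, Set.mem_sigma_iff, mem_coe] at hp hp'
    rw [← insert_erase hp.2, hUU', insert_erase hp'.2]
  have hmaps : D.image e ⊆ s ×ˢ s.powersetCard j := by
    simp only [subset_iff, mem_image, mem_sigma, mem_product, mem_powersetCard, D, e]
    rintro _ ⟨⟨U, r⟩, ⟨⟨hUs, hUcard⟩, hr⟩, rfl⟩
    exact ⟨hUs hr, (erase_subset r U).trans hUs, by rw [card_erase_of_mem hr, hUcard]; rfl⟩
  calc ((j : R) + 1) * ∑ U ∈ s.powersetCard (j + 1), ∏ x ∈ U, f x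
      = ∑ p ∈ D, g (e p) := by
        rw [mul_sum, sum_sigma]
        refine sum_congr rfl fun U hU => ?_
        rw [← card_mul_prod_eq_sum_mul_prod_erase, (mem_powersetCard.mp hU).2, Nat.cast_succ]
    _ = ∑ q ∈ D.image e, g q := (sum_image hinj).symm
    _ ≤ ∑ q ∈ s ×ˢ s.powersetCard j, g q :=
        sum_le_sum_of_subset_of_nonneg hmaps fun q hq _ =>
          mul_nonneg (hf _ (mem_product.mp hq).1) (prod_nonneg fun x hx =>
            hf x ((mem_powersetCard.mp (mem_product.mp hq).2).1 hx))
    _ = (∑ r ∈ s, f r) * ∑ T ∈ s.powersetCard j, ∏ x ∈ T, f x := by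
        rw [sum_product, sum_mul]
        simp only [g, mul_sum]

theorem stmt6_general (m : ℕ) (a : ℕ → ℝ)
    (ha : ∀ k : ℕ, a k = ∑ T ∈ (Finset.Icc 1 (m - 1)).powersetCard k,
      ∏ r ∈ T, (1 : ℝ) / r)
    (j : ℕ) (hj1 : 1 ≤ j) :
    a j / a (j - 1) ≤ (∑ r ∈ Finset.Icc 1 (m - 1), (1 : ℝ) / r) / j := by
  obtain ⟨i, rfl⟩ := Nat.exists_eq_add_of_le' hj1
  have hf : ∀ r ∈ Icc 1 (m - 1), (0 : ℝ) ≤ 1 / r := fun r _ => by positivity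
  have newton := succ_mul_sum_powersetCard_succ_le _ _ hf i
  rw [← ha, ← ha] at newton
  rw [Nat.add_sub_cancel]
  rcases (show 0 ≤ a i by rw [ha]; positivity).eq_or_lt with h0 | hpos
  · rw [← h0, div_zero]
    positivity
  · rw [div_le_div_iff₀ hpos (by positivity)]
    push_cast
    linarith

theorem stmt6 (m : ℕ) (hm : 2 ≤ m) (a : ℕ → ℝ)
    (ha : ∀ k : ℕ, a k = ∑ T ∈ (Finset.Icc 1 (m - 1)).powersetCard k,
      ∏ r ∈ T, (1 : ℝ) / r)
    (j : ℕ) (hj1 : 1 ≤ j) (hj2 : j ≤ m - 1) :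
    a j / a (j - 1) ≤ (∑ r ∈ Finset.Icc 1 (m - 1), (1 : ℝ) / r) / j :=
  stmt6_general m a ha j hj1
end

section
/- For every m ≥ 2 and every integer j with 1 ≤ j ≤ h_{m-1}/2, one has a_j/a_{j-1} ≥ (h_{m-1}-1)/j, where a_j is the j-th elementary symmetric polynomial of 1, 1/2, ..., 1/(m-1) and h_{m-1} = Σ_{r=1}^{m-1} 1/r. -/
/-!
Write `e_k` for the elementary symmetric functions of `x_r = 1/r`, `1 ≤ r ≤ n`, and `S = h_n`.
Newton's identity in the form `(k+2) e_{k+2} = S e_{k+1} - ∑ x_i² e_k(s \ i)` reduces the claim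
to `∑ x_i² e_{j-2}(s \ i) ≤ e_{j-1}`. The term `i = 1` contributes `e_{j-2}` of the tail
`x_2, …, x_n`; for the others, `∑_{i ≥ 2} x_i² ≤ π²/6 - 1 < 9/10`. Since the tail entries are at
most `1/2` and its sum is `S - 1 ≥ 2j - 1`, its elementary symmetric functions grow at least by
the factor `3/2` up to degree `j - 1`, which is exactly enough to absorb that correction.
-/

open Finset

variable {ι R : Type*}

def esymm [CommSemiring R] (s : Finset ι) (x : ι → R) (k : ℕ) : R :=
  ∑ T ∈ s.powersetCard k, ∏ i ∈ T, x i

section CommSemiring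

variable [CommSemiring R] (x : ι → R)

@[simp]
lemma esymm_zero (s : Finset ι) : esymm s x 0 = 1 := by
  simp [esymm]

lemma esymm_one (s : Finset ι) : esymm s x 1 = ∑ i ∈ s, x i := by
  simp [esymm, powersetCard_one]

variable [DecidableEq ι]

lemma esymm_insert_succ {a : ι} {s : Finset ι} (h : a ∉ s) (k : ℕ) :
    esymm (insert a s) x (k + 1) = esymm s x (k + 1) + x a * esymm s x k := by
  have not_mem {T} (hT : T ∈ s.powersetCard k) : a ∉ T := fun ha => h ((mem_powersetCard.1 hT).1 ha)
  have hinj : Set.InjOn (insert a) (s.powersetCard k : Set (Finset ι)) := fun T hT U hU hTU => by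
    rw [← erase_insert (not_mem hT), hTU, erase_insert (not_mem hU)]
  have hdisj : Disjoint (s.powersetCard (k + 1)) ((s.powersetCard k).image (insert a)) := by
    refine disjoint_right.2 fun T hT hT' => ?_
    obtain ⟨U, -, rfl⟩ := mem_image.1 hT
    exact h ((mem_powersetCard.1 hT').1 (mem_insert_self a U))
  rw [esymm, powersetCard_succ_insert h, sum_union hdisj, sum_image hinj, esymm, esymm, mul_sum]
  congr 1
  exact sum_congr rfl fun T hT => prod_insert (not_mem hT)

lemma esymm_succ_eq_erase {i : ι} {s : Finset ι} (hi : i ∈ s) (k : ℕ) :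
    esymm s x (k + 1) = esymm (s.erase i) x (k + 1) + x i * esymm (s.erase i) x k := by
  conv_lhs => rw [← insert_erase hi]
  exact esymm_insert_succ x (notMem_erase i s) k

lemma sum_mul_esymm_erase (s : Finset ι) (k : ℕ) :
    ∑ i ∈ s, x i * esymm (s.erase i) x k = (k + 1) * esymm s x (k + 1) := by
  induction s using Finset.induction_on generalizing k with
  | empty => simp [esymm, powersetCard_eq_empty.2 (by simp : #(∅ : Finset ι) < k + 1)]
  | @insert a s h ih =>
    have herase : ∀ i ∈ s, (insert a s).erase i = insert a (s.erase i) := fun i hi =>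
      erase_insert_of_ne fun hai => h (hai ▸ hi)
    rw [sum_insert h, erase_insert h, sum_congr rfl fun i hi => by rw [herase i hi]]
    cases k with
    | zero => simp [esymm_one, sum_insert h]
    | succ k =>
      have expand : ∀ i ∈ s, x i * esymm (insert a (s.erase i)) x (k + 1)
          = x i * esymm (s.erase i) x (k + 1) + x a * (x i * esymm (s.erase i) x k) := by
        intro i _
        rw [esymm_insert_succ x (fun hai => h (mem_of_mem_erase hai))]
        ring
      rw [sum_congr rfl expand, sum_add_distrib, ← mul_sum, ih, ih, esymm_insert_succ x h]
      push_cast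
      ring

end CommSemiring

lemma succ_succ_mul_esymm [CommRing R] [DecidableEq ι] (x : ι → R) (s : Finset ι) (k : ℕ) :
    (k + 2) * esymm s x (k + 2) =
      (∑ i ∈ s, x i) * esymm s x (k + 1) - ∑ i ∈ s, x i ^ 2 * esymm (s.erase i) x k := by
  have expand : ∀ i ∈ s, x i * esymm (s.erase i) x (k + 1)
      = x i * esymm s x (k + 1) - x i ^ 2 * esymm (s.erase i) x k := fun i hi => by
    rw [esymm_succ_eq_erase x hi]; ring
  have h := sum_mul_esymm_erase x s (k + 1)
  rw [sum_congr rfl expand, sum_sub_distrib, ← sum_mul] at h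
  push_cast at h
  linear_combination -h

section LinearOrder

variable [CommRing R] [LinearOrder R] [IsStrictOrderedRing R] {x : ι → R} {s : Finset ι}

lemma esymm_nonneg (hx : ∀ i ∈ s, 0 ≤ x i) (k : ℕ) : 0 ≤ esymm s x k :=
  sum_nonneg fun _ hT => prod_nonneg fun i hi => hx i ((mem_powersetCard.1 hT).1 hi)

lemma esymm_pos (hx : ∀ i ∈ s, 0 < x i) {k : ℕ} (hk : k ≤ #s) : 0 < esymm s x k :=
  sum_pos (fun _ hT => prod_pos fun i hi => hx i ((mem_powersetCard.1 hT).1 hi))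
    (powersetCard_nonempty.2 hk)

lemma esymm_mono {t : Finset ι} (hst : s ⊆ t) (hx : ∀ i ∈ t, 0 ≤ x i) (k : ℕ) :
    esymm s x k ≤ esymm t x k :=
  sum_le_sum_of_subset_of_nonneg (powersetCard_mono hst) fun _ hT _ =>
    prod_nonneg fun i hi => hx i ((mem_powersetCard.1 hT).1 hi)

variable [DecidableEq ι]

lemma sum_sq_mul_esymm_erase_le (hx : ∀ i ∈ s, 0 ≤ x i) (t : Finset ι) (k : ℕ) :
    ∑ i ∈ t, x i ^ 2 * esymm (s.erase i) x k ≤ (∑ i ∈ t, x i ^ 2) * esymm s x k := by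
  rw [sum_mul]
  exact sum_le_sum fun i _ =>
    mul_le_mul_of_nonneg_left (esymm_mono (erase_subset i s) hx k) (sq_nonneg _)

lemma sub_mul_esymm_le_succ_mul_esymm {c : R} (hx : ∀ i ∈ s, 0 ≤ x i) (hxc : ∀ i ∈ s, x i ≤ c)
    (k : ℕ) : ((∑ i ∈ s, x i) - c * k) * esymm s x k ≤ (k + 1) * esymm s x (k + 1) := by
  cases k with
  | zero => simp [esymm_one]
  | succ k =>
    have hsq : ∑ i ∈ s, x i ^ 2 * esymm (s.erase i) x k ≤ c * ((k + 1) * esymm s x (k + 1)) := by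
      rw [← sum_mul_esymm_erase, mul_sum]
      refine sum_le_sum fun i hi => ?_
      have hE : 0 ≤ esymm (s.erase i) x k := esymm_nonneg (fun r hr => hx r (mem_of_mem_erase hr)) k
      calc x i ^ 2 * esymm (s.erase i) x k = x i * (x i * esymm (s.erase i) x k) := by ring
        _ ≤ c * (x i * esymm (s.erase i) x k) :=
          mul_le_mul_of_nonneg_right (hxc i hi) (mul_nonneg (hx i hi) hE)
    have := succ_succ_mul_esymm x s k
    push_cast
    linarith

lemma mul_esymm_le_esymm_succ {c l : R} (hx : ∀ i ∈ s, 0 ≤ x i) (hxc : ∀ i ∈ s, x i ≤ c)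
    {k : ℕ} (hS : c * k + l * (k + 1) ≤ ∑ i ∈ s, x i) : l * esymm s x k ≤ esymm s x (k + 1) := by
  refine le_of_mul_le_mul_left ?_ (by positivity : (0 : R) < k + 1)
  calc (k + 1) * (l * esymm s x k) = (l * (k + 1)) * esymm s x k := by ring
    _ ≤ ((∑ i ∈ s, x i) - c * k) * esymm s x k :=
      mul_le_mul_of_nonneg_right (by linarith) (esymm_nonneg hx k)
    _ ≤ (k + 1) * esymm s x (k + 1) := sub_mul_esymm_le_succ_mul_esymm hx hxc k

end LinearOrder

lemma esymm_insert_ratio_bound [Field R] [LinearOrder R] [IsStrictOrderedRing R] [DecidableEq ι]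
    {x : ι → R} {a : ι} {t : Finset ι} (ha : a ∉ t) (hxa : x a = 1)
    (hx0 : ∀ i ∈ t, 0 ≤ x i) (hx : ∀ i ∈ t, x i ≤ 1 / 2) (hsq : ∑ i ∈ t, x i ^ 2 ≤ 9 / 10)
    {j : ℕ} (hj : 1 ≤ j) (hjS : 2 * j ≤ ∑ i ∈ t, x i + 1) :
    (∑ i ∈ t, x i) * esymm (insert a t) x (j - 1) ≤ j * esymm (insert a t) x j := by
  obtain rfl | ⟨u, rfl⟩ : j = 1 ∨ ∃ u, j = u + 2 := by
    rcases j with _ | _ | u <;> simp_all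
  · simp [esymm_one, sum_insert ha, hxa]
  set S := ∑ i ∈ t, x i
  set E := esymm t x
  have hx0' : ∀ i ∈ insert a t, 0 ≤ x i := by
    simpa [forall_mem_insert, hxa] using hx0
  have ratio : ∀ k ≤ u, 3 / 2 * E k ≤ E (k + 1) := fun k hk =>
    mul_esymm_le_esymm_succ hx0 hx (by
      have : (k : R) ≤ u := by exact_mod_cast hk
      push_cast at hjS
      linarith)
  have hinsert : esymm (insert a t) x u ≤ 5 / 3 * E u := by
    cases u with
    | zero => simp [E]; norm_num
    | succ v =>
      rw [esymm_insert_succ x ha, hxa]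
      linarith [ratio v (by omega)]
  have hD : ∑ i ∈ insert a t, x i ^ 2 * esymm ((insert a t).erase i) x u
      ≤ esymm (insert a t) x (u + 1) := by
    rw [sum_insert ha, erase_insert ha, esymm_insert_succ x ha, hxa]
    have h1 := sum_sq_mul_esymm_erase_le hx0' t u
    have h2 := mul_le_mul_of_nonneg_right hsq (esymm_nonneg hx0' u)
    linarith [ratio u le_rfl]
  have newton := succ_succ_mul_esymm x (insert a t) u
  rw [sum_insert ha, hxa] at newton
  push_cast
  linarith

lemma sum_Icc_two_one_div_sq_le (n : ℕ) : ∑ r ∈ Icc 2 n, (1 / (r : ℝ)) ^ 2 ≤ 9 / 10 := by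
  have h := sum_le_hasSum (insert 1 (Icc 2 n)) (fun _ _ => by positivity) hasSum_zeta_two
  rw [sum_insert (by simp)] at h
  simp only [one_div_pow]
  nlinarith [Real.pi_lt_d2, Real.pi_pos]

lemma harmonic_esymm_ratio_bound (n j : ℕ) (hj : 1 ≤ j) (hjS : 2 * j ≤ ∑ r ∈ Icc 1 n, (1 : ℝ) / r) :
    (∑ r ∈ Icc 1 n, (1 : ℝ) / r - 1) * esymm (Icc 1 n) (fun r => (1 : ℝ) / r) (j - 1)
      ≤ j * esymm (Icc 1 n) (fun r => (1 : ℝ) / r) j := by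
  have hn : 1 ≤ n := by
    by_contra! h
    have : (1 : ℝ) ≤ j := by exact_mod_cast hj
    simp [Nat.lt_one_iff.1 h] at hjS
    linarith
  have hsplit : Icc 1 n = insert 1 (Icc 2 n) := by
    ext r
    simp only [mem_Icc, mem_insert]
    omega
  have h1 : 1 ∉ Icc 2 n := by simp
  have hx0 : ∀ r ∈ Icc 2 n, 0 ≤ (1 : ℝ) / r := fun _ _ => by positivity
  have hx : ∀ r ∈ Icc 2 n, (1 : ℝ) / r ≤ 1 / 2 := fun r hr =>
    one_div_le_one_div_of_le two_pos (by exact_mod_cast (mem_Icc.1 hr).1)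
  rw [hsplit, sum_insert h1] at hjS ⊢
  have key := esymm_insert_ratio_bound h1 (by simp) hx0 hx (sum_Icc_two_one_div_sq_le n) hj
    (by simp only [Nat.cast_one, div_one] at hjS; linarith)
  simpa using key

theorem stmt7_general (m : ℕ) (a : ℕ → ℝ)
    (ha : ∀ k : ℕ, a k = ∑ T ∈ (Finset.Icc 1 (m - 1)).powersetCard k,
      ∏ r ∈ T, (1 : ℝ) / r)
    (j : ℕ) (hj1 : 1 ≤ j)
    (hj2 : (j : ℝ) ≤ (∑ r ∈ Finset.Icc 1 (m - 1), (1 : ℝ) / r) / 2) :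
    ((∑ r ∈ Finset.Icc 1 (m - 1), (1 : ℝ) / r) - 1) / j ≤ a j / a (j - 1) := by
  set n := m - 1
  have haE : ∀ k, a k = esymm (Icc 1 n) (fun r => (1 : ℝ) / r) k := ha
  have hS : ∑ r ∈ Icc 1 n, (1 : ℝ) / r ≤ n := by
    simpa using sum_le_card_nsmul (Icc 1 n) (fun r => (1 : ℝ) / r) 1 fun r hr =>
      div_le_one_of_le₀ (by exact_mod_cast (mem_Icc.1 hr).1) r.cast_nonneg
  have hpos : 0 < a (j - 1) := by
    rw [haE]
    refine esymm_pos (fun r hr => one_div_pos.2 (Nat.cast_pos.2 (mem_Icc.1 hr).1)) ?_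
    have : j ≤ n := by exact_mod_cast (by linarith : (j : ℝ) ≤ n)
    rw [Nat.card_Icc]
    omega
  rw [div_le_div_iff₀ (by exact_mod_cast hj1) hpos, haE, haE]
  linarith [harmonic_esymm_ratio_bound n j hj1 (by linarith)]

theorem stmt7 (m : ℕ) (hm : 2 ≤ m) (a : ℕ → ℝ)
    (ha : ∀ k : ℕ, a k = ∑ T ∈ (Finset.Icc 1 (m - 1)).powersetCard k,
      ∏ r ∈ T, (1 : ℝ) / r)
    (j : ℕ) (hj1 : 1 ≤ j)
    (hj2 : (j : ℝ) ≤ (∑ r ∈ Finset.Icc 1 (m - 1), (1 : ℝ) / r) / 2) :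
    ((∑ r ∈ Finset.Icc 1 (m - 1), (1 : ℝ) / r) - 1) / j ≤ a j / a (j - 1) :=
  stmt7_general m a ha j hj1 hj2
end

section
/- For every m ≥ 2 and 1 ≤ j ≤ m-1, the inequality h_{m-1}·a_{j-1} ≤ j·a_j + 2·a_{j-2} holds, where a_j is the j-th elementary symmetric polynomial of 1, 1/2, ..., 1/(m-1), a_{-1} = 0, and h_{m-1} = Σ_{r=1}^{m-1} 1/r. -/
/-!
Write `e k` for the `k`-th elementary symmetric sum of the weights `x r`, `r ∈ S`. Multiplying
`e k` by `∑ r, x r` gives the products `x r * ∏ T` with `r ∉ T`, which assemble every product of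
`k + 1` distinct weights exactly `k + 1` times, plus the products with `r ∈ T`. The latter
contain the square `x r ^ 2` and, removing `r` from `T`, are bounded by `(∑ r, x r ^ 2) * e (k - 1)`.
For the weights `1 / r` we have `∑ r, 1 / r ^ 2 ≤ 2`.
-/

open Finset

namespace Finset

variable {α β R : Type*} [DecidableEq α]

theorem sum_powersetCard_sum_sdiff_insert [AddCommMonoid β] (S : Finset α) (k : ℕ)
    (f : Finset α → α → β) :
    ∑ T ∈ S.powersetCard k, ∑ r ∈ S \ T, f (insert r T) r =
      ∑ U ∈ S.powersetCard (k + 1), ∑ r ∈ U, f U r := by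
  rw [sum_sigma', sum_sigma']
  refine sum_bij' (fun p _ => ⟨insert p.2 p.1, p.2⟩) (fun p _ => ⟨p.1.erase p.2, p.2⟩)
    ?_ ?_ ?_ ?_ ?_
  · rintro ⟨T, r⟩ hp
    simp only [mem_sigma, mem_powersetCard, mem_sdiff] at hp ⊢
    exact ⟨⟨insert_subset hp.2.1 hp.1.1, by rw [card_insert_of_notMem hp.2.2, hp.1.2]⟩,
      mem_insert_self _ _⟩
  · rintro ⟨U, r⟩ hp
    simp only [mem_sigma, mem_powersetCard, mem_sdiff] at hp ⊢
    exact ⟨⟨(erase_subset _ _).trans hp.1.1, by rw [card_erase_of_mem hp.2, hp.1.2]; rfl⟩,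
      hp.1.1 hp.2, notMem_erase _ _⟩
  · rintro ⟨T, r⟩ hp
    simp [erase_insert (mem_sdiff.1 (mem_sigma.1 hp).2).2]
  · rintro ⟨U, r⟩ hp
    simp [insert_erase (mem_sigma.1 hp).2]
  · rintro ⟨T, r⟩ _
    rfl

section CommSemiring

variable [CommSemiring R] (S : Finset α) (k : ℕ) (x : α → R)

theorem sum_powersetCard_sum_sdiff_mul_prod :
    ∑ T ∈ S.powersetCard k, ∑ r ∈ S \ T, x r * ∏ i ∈ T, x i =
      (k + 1 : R) * ∑ U ∈ S.powersetCard (k + 1), ∏ i ∈ U, x i := by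
  calc ∑ T ∈ S.powersetCard k, ∑ r ∈ S \ T, x r * ∏ i ∈ T, x i
      = ∑ T ∈ S.powersetCard k, ∑ r ∈ S \ T, ∏ i ∈ insert r T, x i :=
        sum_congr rfl fun T _ => sum_congr rfl fun r hr =>
          (prod_insert (mem_sdiff.1 hr).2).symm
    _ = ∑ U ∈ S.powersetCard (k + 1), ∑ _r ∈ U, ∏ i ∈ U, x i :=
        sum_powersetCard_sum_sdiff_insert S k fun U _ => ∏ i ∈ U, x i
    _ = _ := by
        rw [mul_sum]
        refine sum_congr rfl fun U hU => ?_
        rw [sum_const, (mem_powersetCard.1 hU).2, nsmul_eq_mul]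
        push_cast
        rfl

theorem sum_powersetCard_succ_sum_mul_prod :
    ∑ T ∈ S.powersetCard (k + 1), ∑ r ∈ T, x r * ∏ i ∈ T, x i =
      ∑ U ∈ S.powersetCard k, ∑ r ∈ S \ U, x r ^ 2 * ∏ i ∈ U, x i := by
  rw [← sum_powersetCard_sum_sdiff_insert S k fun U r => x r * ∏ i ∈ U, x i]
  refine sum_congr rfl fun U _ => sum_congr rfl fun r hr => ?_
  rw [prod_insert (mem_sdiff.1 hr).2, sq, mul_assoc]

theorem sum_mul_sum_powersetCard_prod :
    (∑ r ∈ S, x r) * ∑ T ∈ S.powersetCard k, ∏ i ∈ T, x i =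
      (k + 1 : R) * ∑ U ∈ S.powersetCard (k + 1), ∏ i ∈ U, x i +
        ∑ T ∈ S.powersetCard k, ∑ r ∈ T, x r * ∏ i ∈ T, x i := by
  rw [mul_sum, ← sum_powersetCard_sum_sdiff_mul_prod, ← sum_add_distrib]
  refine sum_congr rfl fun T hT => ?_
  rw [sum_mul, sum_sdiff (mem_powersetCard.1 hT).1]

end CommSemiring

theorem sum_mul_sum_powersetCard_succ_prod_le [CommSemiring R] [PartialOrder R]
    [IsOrderedRing R] (S : Finset α) (k : ℕ) {x : α → R} (hx : ∀ i ∈ S, 0 ≤ x i) :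
    (∑ r ∈ S, x r) * ∑ T ∈ S.powersetCard (k + 1), ∏ i ∈ T, x i ≤
      (k + 2 : R) * ∑ U ∈ S.powersetCard (k + 2), ∏ i ∈ U, x i +
        (∑ r ∈ S, x r ^ 2) * ∑ T ∈ S.powersetCard k, ∏ i ∈ T, x i := by
  rw [sum_mul_sum_powersetCard_prod, sum_powersetCard_succ_sum_mul_prod]
  refine add_le_add (le_of_eq (by push_cast; ring)) ?_
  rw [mul_sum]
  gcongr with U hU
  rw [← sum_mul]
  have hUS := (mem_powersetCard.1 hU).1
  exact mul_le_mul_of_nonneg_right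
    (sum_le_sum_of_subset_of_nonneg sdiff_subset fun i hi _ => pow_nonneg (hx i hi) 2)
    (prod_nonneg fun i hi => hx i (hUS hi))

end Finset

theorem stmt8_general (m : ℕ) (a : ℤ → ℝ)
    (ha0 : ∀ k : ℤ, k < 0 → a k = 0)
    (ha : ∀ k : ℕ, a k = ∑ T ∈ (Finset.Icc 1 (m - 1)).powersetCard k,
      ∏ r ∈ T, (1 : ℝ) / r)
    (j : ℕ) :
    (∑ r ∈ Finset.Icc 1 (m - 1), (1 : ℝ) / r) * a ((j : ℤ) - 1) ≤
      (j : ℝ) * a j + 2 * a ((j : ℤ) - 2) := by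
  have hsq : ∑ r ∈ Icc 1 (m - 1), ((1 : ℝ) / r) ^ 2 ≤ 2 := by
    have hIoo : Ioo 0 m = Icc 1 (m - 1) := by ext; simp; omega
    simpa [hIoo] using sum_Ioo_inv_sq_le (α := ℝ) 0 m
  rcases j with _ | _ | i
  · simp [ha0]
  · have h1 : ((0 + 1 : ℕ) : ℤ) - 1 = ((0 : ℕ) : ℤ) := by norm_num
    have h2 : ((0 + 1 : ℕ) : ℤ) - 2 < 0 := by norm_num
    rw [h1, ha0 _ h2, ha, ha, sum_mul_sum_powersetCard_prod]
    simp
  · have h1 : ((i + 2 : ℕ) : ℤ) - 1 = ((i + 1 : ℕ) : ℤ) := by push_cast; ring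
    have h2 : ((i + 2 : ℕ) : ℤ) - 2 = (i : ℤ) := by push_cast; ring
    rw [h1, h2, ha, ha, ha]
    calc _ ≤ (i + 2 : ℝ) * ∑ U ∈ (Icc 1 (m - 1)).powersetCard (i + 2), ∏ r ∈ U, (1 : ℝ) / r +
          (∑ r ∈ Icc 1 (m - 1), ((1 : ℝ) / r) ^ 2) *
            ∑ T ∈ (Icc 1 (m - 1)).powersetCard i, ∏ r ∈ T, (1 : ℝ) / r :=
          sum_mul_sum_powersetCard_succ_prod_le _ i fun r _ => by positivity
      _ ≤ _ := add_le_add (le_of_eq (by push_cast; ring)) (by gcongr)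

theorem stmt8 (m : ℕ) (hm : 2 ≤ m) (a : ℤ → ℝ)
    (ha0 : ∀ k : ℤ, k < 0 → a k = 0)
    (ha : ∀ k : ℕ, a k = ∑ T ∈ (Finset.Icc 1 (m - 1)).powersetCard k,
      ∏ r ∈ T, (1 : ℝ) / r)
    (j : ℕ) (hj1 : 1 ≤ j) (hj2 : j ≤ m - 1) :
    (∑ r ∈ Finset.Icc 1 (m - 1), (1 : ℝ) / r) * a ((j : ℤ) - 1) ≤
      (j : ℝ) * a j + 2 * a ((j : ℤ) - 2) :=
  stmt8_general m a ha0 ha j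
end

section
/- Let k ≥ 1, s = σ+it with 0 < σ < 1 and t^2 ≤ k, and let w > 0 be a real number. Then Re( ((k+2)/(k+s))·w + ((k+s+1)/(k+2))·(1/w) ) ≥ 2. -/
/-!
With `A = (k+2)/(k+s)` and `B = (k+s+1)/(k+2)`, the real part in question is
`Re A · w + Re B / w ≥ 2 √(Re A · Re B)` by AM-GM, and
`Re A · Re B = (k+σ)(k+σ+1) / ((k+σ)² + t²)`, which is `≥ 1` exactly when `t² ≤ k + σ`.
-/

open Complex

theorem two_le_mul_add_div_of_one_le_mul {a b w : ℝ} (hb : 0 ≤ b) (hab : 1 ≤ a * b)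
    (hw : 0 < w) : 2 ≤ a * w + b / w := by
  have hb : 0 < b := hb.lt_of_ne (by rintro rfl; simp at hab; linarith)
  have key : a * w + b / w - 2 = ((b - w) ^ 2 + (a * b - 1) * w ^ 2) / (b * w) := by
    field_simp
    ring
  have : 0 ≤ ((b - w) ^ 2 + (a * b - 1) * w ^ 2) / (b * w) := by
    have : 0 ≤ a * b - 1 := by linarith
    positivity
  linarith

theorem re_mul_ofReal_add_mul_one_div_ofReal (z u : ℂ) (w : ℝ) :
    (z * w + u * (1 / (w : ℂ))).re = z.re * w + u.re / w := by
  rw [one_div, ← ofReal_inv, add_re, re_mul_ofReal, re_mul_ofReal, div_eq_mul_inv]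

theorem re_ofReal_div (c : ℝ) (z : ℂ) : ((c : ℂ) / z).re = c * z.re / normSq z := by
  simp [div_re]

theorem one_le_re_div_mul_re_add_one_div {z : ℂ} (hre : 0 < z.re) (him : z.im ^ 2 ≤ z.re)
    {c : ℝ} (hc : 0 < c) : 1 ≤ ((c : ℂ) / z).re * ((z + 1) / c).re := by
  have hz : 0 < normSq z := normSq_pos.2 fun h => by simp [h] at hre
  rw [re_ofReal_div, div_ofReal_re, add_re, one_re, normSq_apply] at *
  rw [div_mul_div_comm, le_div_iff₀ (by positivity)]
  nlinarith

theorem stmt10_general (k : ℕ) (σ t : ℝ) (hσ0 : 0 < σ)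
    (ht : t ^ 2 ≤ k) (s : ℂ) (hs : s = σ + t * Complex.I) (w : ℝ) (hw : 0 < w) :
    2 ≤ ((((k : ℂ) + 2) / ((k : ℂ) + s)) * (w : ℂ) +
        (((k : ℂ) + s + 1) / ((k : ℂ) + 2)) * (1 / (w : ℂ))).re := by
  have hc : 0 < (k : ℝ) + 2 := by positivity
  have hre : ((k : ℂ) + s).re = k + σ := by simp [hs]
  have him : ((k : ℂ) + s).im = t := by simp [hs]
  have hcast : (k : ℂ) + 2 = (((k : ℝ) + 2 : ℝ) : ℂ) := by push_cast; rfl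
  rw [re_mul_ofReal_add_mul_one_div_ofReal, hcast]
  refine two_le_mul_add_div_of_one_le_mul ?_ ?_ hw
  · rw [div_ofReal_re, add_re, hre, one_re]
    positivity
  · exact one_le_re_div_mul_re_add_one_div (by rw [hre]; positivity)
      (by rw [hre, him]; linarith) hc

theorem stmt10 (k : ℕ) (hk : 1 ≤ k) (σ t : ℝ) (hσ0 : 0 < σ) (hσ1 : σ < 1)
    (ht : t ^ 2 ≤ k) (s : ℂ) (hs : s = σ + t * Complex.I) (w : ℝ) (hw : 0 < w) :
    2 ≤ ((((k : ℂ) + 2) / ((k : ℂ) + s)) * (w : ℂ) +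
        (((k : ℂ) + s + 1) / ((k : ℂ) + 2)) * (1 / (w : ℂ))).re :=
  stmt10_general k σ t hσ0 ht s hs w hw
end

section
/- If s is real with 0 < s < 1, and (a_k) is a positive logarithmically concave sequence (so a_k/a_{k-1} is decreasing), then with v_k = (k+1)a_k/((k+s)a_{k-1}) the sequence (v_k) is decreasing, and (v_k+1)(1+1/v_{k+1}) ≥ 4 for all k ≥ 1. -/
/-!
Write `v k = c k * r k` with `c k = (k + 1) / (k + s)` and `r k = a k / a (k - 1)`. Both factors are
positive and decreasing: `r` by log-concavity, `c` because `s ≤ 1`. Hence `v` decreases, and then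
`(v k + 1) (1 + 1 / v (k + 1)) ≥ (v (k + 1) + 1) (1 + 1 / v (k + 1)) = 2 + (x + 1 / x) ≥ 4`
with `x = v (k + 1)`.
-/

lemma two_le_add_one_div {x : ℝ} (hx : 0 < x) : 2 ≤ x + 1 / x := by
  rw [← sub_nonneg]
  have key : x + 1 / x - 2 = (x - 1) ^ 2 / x := by field_simp; ring
  rw [key]
  positivity

lemma four_le_add_one_mul_one_add_one_div {x y : ℝ} (hy : 0 < y) (hyx : y ≤ x) :
    4 ≤ (x + 1) * (1 + 1 / y) :=
  calc (4 : ℝ) ≤ 2 + (y + 1 / y) := by linarith [two_le_add_one_div hy]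
    _ = (y + 1) * (1 + 1 / y) := by field_simp; ring
    _ ≤ (x + 1) * (1 + 1 / y) := by gcongr

lemma div_le_div_of_mul_le_sq {x y z : ℝ} (hx : 0 < x) (hy : 0 < y) (h : x * z ≤ y ^ 2) :
    z / y ≤ y / x := by
  rw [div_le_div_iff₀ hy hx]
  linarith

lemma succ_div_add_le_div_add {t s : ℝ} (hts : 0 < t + s) (hs : s ≤ 1) :
    (t + 1 + 1) / (t + 1 + s) ≤ (t + 1) / (t + s) := by
  rw [div_le_div_iff₀ (by linarith) hts]
  nlinarith

theorem stmt13 (s : ℝ) (hs0 : 0 < s) (hs1 : s < 1) (a : ℕ → ℝ)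
    (hpos : ∀ k, 0 < a k)
    (hlc : ∀ k : ℕ, 1 ≤ k → a (k - 1) * a (k + 1) ≤ (a k) ^ 2)
    (v : ℕ → ℝ)
    (hv : ∀ k : ℕ, v k = ((k : ℝ) + 1) * a k / (((k : ℝ) + s) * a (k - 1))) :
    (∀ k : ℕ, 1 ≤ k → v (k + 1) ≤ v k) ∧
      (∀ k : ℕ, 1 ≤ k → 4 ≤ (v k + 1) * (1 + 1 / v (k + 1))) := by
  have hks (k : ℕ) : 0 < (k : ℝ) + s := by positivity
  have hv' (k : ℕ) : v k = ((k : ℝ) + 1) / ((k : ℝ) + s) * (a k / a (k - 1)) := by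
    rw [hv, mul_div_mul_comm]
  have hvpos (k : ℕ) : 0 < v k := by
    rw [hv']
    exact mul_pos (div_pos (by positivity) (hks k)) (div_pos (hpos k) (hpos _))
  have hdec (k : ℕ) (hk : 1 ≤ k) : v (k + 1) ≤ v k := by
    rw [hv', hv', Nat.add_sub_cancel]
    push_cast
    exact mul_le_mul (succ_div_add_le_div_add (hks k) hs1.le)
      (div_le_div_of_mul_le_sq (hpos _) (hpos k) (hlc k hk))
      (div_pos (hpos _) (hpos k)).le (div_pos (by positivity) (hks k)).le
  exact ⟨hdec, fun k hk => four_le_add_one_mul_one_add_one_div (hvpos _) (hdec k hk)⟩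
end

section
/- For every real r > 0, the power series coefficients (d_k(r)) of z ↦ r^2(1-z)/sinh^2(r√(1-z)/2) form a logarithmically concave sequence: d_k(r)^2 ≥ d_{k-1}(r)·d_{k+1}(r) for all k ≥ 1. -/
/-!
Put `a = r / 2` and `u = a √(1 - z)`, so that the function is `4 u² / sinh² u`. With
`tⱼ = 1 - (1 + a² / (π² (j + 1)²))⁻¹ ∈ (0, 1)` one has
`1 - tⱼ z = (1 + u² / (π² (j + 1)²)) / (1 + a² / (π² (j + 1)²))`, so Euler's product
`sinh x / x = ∏ⱼ (1 + x² / (π² (j + 1)²))` writes the function as `(r / sinh a)² ∏ⱼ (1 - tⱼ z)⁻²`.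

Dividing a power series by `1 - t z` replaces its coefficients `aₖ` by `cₖ` with
`cₖ₊₁ = t cₖ + aₖ₊₁`; for `t > 0` this preserves positivity and log-concavity, so every finite
product has log-concave coefficients. These increase with the number of factors and stay below
`(sinh a / a)²`, which bounds the value of the finite products at `z = 1`; hence they converge,
dominated convergence shows that the limits are the coefficients of the infinite product, and
log-concavity passes to the limit.
-/

open Finset Filter Topology Real

section LogConcave

variable {R : Type*}

def LogConcave [Semiring R] [LE R] (a : ℕ → R) : Prop := ∀ k, a k * a (k + 2) ≤ a (k + 1) ^ 2

variable [CommRing R] [LinearOrder R] [IsStrictOrderedRing R] {a : ℕ → R}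

theorem LogConcave.mul_le_mul_of_le (ha : ∀ k, 0 < a k) (h : LogConcave a) {i j : ℕ}
    (hij : i ≤ j) : a i * a (j + 1) ≤ a (i + 1) * a j := by
  induction j, hij using Nat.le_induction with
  | base => rw [mul_comm]
  | succ j hij ih =>
    refine le_of_mul_le_mul_right ?_ (ha (j + 1))
    calc a i * a (j + 2) * a (j + 1) = a i * a (j + 1) * a (j + 2) := by ring
      _ ≤ a (i + 1) * a j * a (j + 2) := mul_le_mul_of_nonneg_right ih (ha _).le
      _ = a (i + 1) * (a j * a (j + 2)) := by ring
      _ ≤ a (i + 1) * a (j + 1) ^ 2 := mul_le_mul_of_nonneg_left (h j) (ha _).le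
      _ = a (i + 1) * a (j + 1) * a (j + 1) := by ring

theorem LogConcave.const_mul (h : LogConcave a) (c : R) : LogConcave fun k => c * a k :=
  fun k => by linear_combination mul_le_mul_of_nonneg_left (h k) (sq_nonneg c)

end LogConcave

theorem LogConcave.of_tendsto {R ι : Type*} [Semiring R] [Preorder R] [TopologicalSpace R]
    [ContinuousMul R] [OrderClosedTopology R] {l : Filter ι} [l.NeBot] {q : ι → ℕ → R}
    {Q : ℕ → R} (hq : ∀ᶠ n in l, LogConcave (q n)) (hQ : ∀ k, Tendsto (q · k) l (𝓝 (Q k))) :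
    LogConcave Q := fun k =>
  le_of_tendsto_of_tendsto ((hQ k).mul (hQ (k + 2))) ((hQ (k + 1)).pow 2) (hq.mono fun _ h => h k)

def geomConv {R : Type*} [Semiring R] (t : R) (a : ℕ → R) : ℕ → R
  | 0 => a 0
  | k + 1 => t * geomConv t a k + a (k + 1)

section geomConv

variable {R : Type*}

@[simp] theorem geomConv_zero [Semiring R] (t : R) (a : ℕ → R) : geomConv t a 0 = a 0 := rfl

theorem geomConv_succ [Semiring R] (t : R) (a : ℕ → R) (k : ℕ) :
    geomConv t a (k + 1) = t * geomConv t a k + a (k + 1) := rfl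

theorem geomConv_eq_sum [CommSemiring R] (t : R) (a : ℕ → R) (k : ℕ) :
    geomConv t a k = ∑ i ∈ range (k + 1), a i * t ^ (k - i) := by
  induction k with
  | zero => simp
  | succ k ih =>
    rw [geomConv_succ, ih, sum_range_succ _ (k + 1), mul_sum]
    congr 1
    · refine sum_congr rfl fun i hi => ?_
      rw [Nat.sub_add_comm (mem_range_succ_iff.mp hi), pow_succ]
      ring
    · simp

variable [CommRing R] [LinearOrder R] [IsStrictOrderedRing R] {t : R} {a : ℕ → R}

theorem geomConv_nonneg (ht : 0 ≤ t) (ha : ∀ k, 0 ≤ a k) (k : ℕ) : 0 ≤ geomConv t a k := by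
  induction k with
  | zero => exact ha 0
  | succ k ih => exact add_nonneg (mul_nonneg ht ih) (ha _)

theorem le_geomConv (ht : 0 ≤ t) (ha : ∀ k, 0 ≤ a k) (k : ℕ) : a k ≤ geomConv t a k := by
  cases k with
  | zero => rfl
  | succ k => exact le_add_of_nonneg_left (mul_nonneg ht (geomConv_nonneg ht ha k))

theorem geomConv_pos (ht : 0 < t) (ha : ∀ k, 0 ≤ a k) (ha₀ : 0 < a 0) (k : ℕ) :
    0 < geomConv t a k := by
  induction k with
  | zero => exact ha₀
  | succ k ih => exact add_pos_of_pos_of_nonneg (mul_pos ht ih) (ha _)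

-- The case `k = m` is what log-concavity of `geomConv t a` needs; general `k ≤ m` makes the
-- induction on `k` go through.
theorem geomConv_mul_le (ht : 0 ≤ t) (ha : ∀ k, 0 ≤ a k)
    (hratio : ∀ i j, i ≤ j → a i * a (j + 1) ≤ a (i + 1) * a j) {k m : ℕ} (hkm : k ≤ m) :
    geomConv t a k * a (m + 2) ≤ a (m + 1) * geomConv t a (k + 1) := by
  induction k with
  | zero =>
    have := hratio 0 (m + 1) (by omega)
    simp only [geomConv_zero, geomConv_succ, zero_add]
    linear_combination this + mul_nonneg (mul_nonneg ht (ha 0)) (ha (m + 1))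
  | succ k ih =>
    have := hratio (k + 1) (m + 1) (by omega)
    rw [geomConv_succ, geomConv_succ t a (k + 1)]
    linear_combination this + mul_le_mul_of_nonneg_left (ih (by omega)) ht

theorem logConcave_geomConv (ht : 0 ≤ t) (ha : ∀ k, 0 ≤ a k)
    (hratio : ∀ i j, i ≤ j → a i * a (j + 1) ≤ a (i + 1) * a j) : LogConcave (geomConv t a) := by
  intro k
  have := geomConv_mul_le ht ha hratio le_rfl (k := k)
  rw [geomConv_succ t a (k + 1)]
  linear_combination this - geomConv t a (k + 1) * geomConv_succ t a k

end geomConv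

theorem HasSum.geomConv {𝕜 : Type*} [NormedField 𝕜] [CompleteSpace 𝕜] {t z A : 𝕜} {a : ℕ → 𝕜}
    (ha : HasSum (fun k => a k * z ^ k) A) (ha' : Summable fun k => ‖a k * z ^ k‖)
    (htz : ‖t * z‖ < 1) : HasSum (fun k => geomConv t a k * z ^ k) (A * (1 - t * z)⁻¹) := by
  have hprod :=
    hasSum_sum_range_mul_of_summable_norm ha' (summable_norm_geometric_of_norm_lt_one htz)
  rw [ha.tsum_eq, (hasSum_geometric_of_norm_lt_one htz).tsum_eq] at hprod
  refine hprod.congr_fun fun k => ?_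
  rw [geomConv_eq_sum, sum_mul]
  refine sum_congr rfl fun i hi => ?_
  rw [mul_pow, ← pow_mul_pow_sub z (mem_range_succ_iff.mp hi)]
  ring

def geomProdCoeff {R : Type*} [Semiring R] (s : ℕ → R) : ℕ → ℕ → R
  | 0 => Pi.single 0 1
  | n + 1 => geomConv (s n) (geomProdCoeff s n)

section geomProdCoeff

@[simp] theorem geomProdCoeff_apply_zero {R : Type*} [Semiring R] (s : ℕ → R) (n : ℕ) :
    geomProdCoeff s n 0 = 1 := by
  induction n with
  | zero => simp [geomProdCoeff]
  | succ n ih => simpa [geomProdCoeff] using ih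

variable {R : Type*} [CommRing R] [LinearOrder R] [IsStrictOrderedRing R] {s : ℕ → R}

theorem geomProdCoeff_nonneg (hs : ∀ i, 0 ≤ s i) (n k : ℕ) : 0 ≤ geomProdCoeff s n k := by
  induction n generalizing k with
  | zero => by_cases hk : k = 0 <;> simp [geomProdCoeff, hk]
  | succ n ih => exact geomConv_nonneg (hs n) ih k

theorem geomProdCoeff_monotone (hs : ∀ i, 0 ≤ s i) (k : ℕ) :
    Monotone fun n => geomProdCoeff s n k :=
  monotone_nat_of_le_succ fun n => le_geomConv (hs n) (geomProdCoeff_nonneg hs n) k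

theorem geomProdCoeff_mul_le_mul (hs : ∀ i, 0 < s i) (n : ℕ) {i j : ℕ} (hij : i ≤ j) :
    geomProdCoeff s n i * geomProdCoeff s n (j + 1) ≤
      geomProdCoeff s n (i + 1) * geomProdCoeff s n j := by
  induction n generalizing i j with
  | zero => simp [geomProdCoeff, Pi.single_apply]
  | succ n ih =>
    have hnonneg := geomProdCoeff_nonneg (fun i => (hs i).le) n
    refine LogConcave.mul_le_mul_of_le (fun k => ?_) ?_ hij
    · exact geomConv_pos (hs n) hnonneg (by simp) k
    · exact logConcave_geomConv (hs n).le hnonneg fun _ _ => ih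

theorem logConcave_geomProdCoeff (hs : ∀ i, 0 < s i) (n : ℕ) :
    LogConcave (geomProdCoeff s n) :=
  fun k => by simpa [sq] using geomProdCoeff_mul_le_mul hs n (Nat.le_succ k)

end geomProdCoeff

theorem hasSum_geomProdCoeff {s : ℕ → ℝ} (hs : ∀ i, 0 ≤ s i) {z : ℝ} (hz : ∀ i, s i * |z| < 1)
    (n : ℕ) :
    HasSum (fun k => geomProdCoeff s n k * z ^ k) (∏ i ∈ range n, (1 - s i * z)⁻¹) := by
  induction n generalizing z with
  | zero =>
    convert hasSum_single (f := fun k => geomProdCoeff s 0 k * z ^ k) 0 fun k hk => by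
      simp [geomProdCoeff, hk]
    simp [geomProdCoeff]
  | succ n ih =>
    have hnorm : Summable fun k => ‖geomProdCoeff s n k * z ^ k‖ := by
      simpa [abs_mul, abs_of_nonneg (geomProdCoeff_nonneg hs n _)] using
        (ih (z := |z|) (by simpa using hz)).summable
    rw [prod_range_succ]
    refine (ih hz).geomConv hnorm ?_
    simpa [abs_mul, abs_of_nonneg (hs n)] using hz n

theorem hasSum_pow_of_tendsto {𝕜 ι : Type*} [NormedField 𝕜] [CompleteSpace 𝕜] {l : Filter ι}
    [l.NeBot] {q : ι → ℕ → 𝕜} {Q : ℕ → 𝕜} {P : ι → 𝕜} {M : ℝ} {z L : 𝕜} (hz : ‖z‖ < 1)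
    (hbound : ∀ n k, ‖q n k‖ ≤ M) (hQ : ∀ k, Tendsto (fun n => q n k) l (𝓝 (Q k)))
    (hP : ∀ n, HasSum (fun k => q n k * z ^ k) (P n)) (hL : Tendsto P l (𝓝 L)) :
    HasSum (fun k => Q k * z ^ k) L := by
  have hgeom : Summable fun k => M * ‖z‖ ^ k :=
    (summable_geometric_of_lt_one (norm_nonneg z) hz).mul_left M
  have hQbound (k : ℕ) : ‖Q k‖ ≤ M :=
    le_of_tendsto (hQ k).norm (Eventually.of_forall fun n => hbound n k)
  have hsum : Tendsto P l (𝓝 (∑' k, Q k * z ^ k)) := by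
    refine (tendsto_tsum_of_dominated_convergence hgeom (fun k => (hQ k).mul_const (z ^ k))
      (Eventually.of_forall fun n k => ?_)).congr fun n => (hP n).tsum_eq
    rw [norm_mul, norm_pow]
    exact mul_le_mul_of_nonneg_right (hbound n k) (by positivity)
  rw [tendsto_nhds_unique hL hsum]
  refine (Summable.of_norm_bounded hgeom fun k => ?_).hasSum
  rw [norm_mul, norm_pow]
  exact mul_le_mul_of_nonneg_right (hQbound k) (by positivity)

open FormalMultilinearSeries in
theorem hasFPowerSeriesAt_ofScalars_of_hasSum {𝕜 : Type*} [NontriviallyNormedField 𝕜]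
    {a : ℕ → 𝕜} {f : 𝕜 → 𝕜} {R : ℝ} (hR : 0 < R)
    (ha : ∀ z : 𝕜, ‖z‖ < R → HasSum (fun k => a k * z ^ k) (f z)) :
    HasFPowerSeriesAt f (ofScalars 𝕜 a) 0 := by
  obtain ⟨z₀, hz₀, hz₀R⟩ := NormedField.exists_norm_lt 𝕜 hR
  refine ⟨‖z₀‖₊, ?_, by simpa using hz₀, fun {y} hy => ?_⟩
  · refine le_radius_of_tendsto _ (l := 0) ?_
    simpa [ofScalars_norm, norm_mul, norm_pow] using
      (ha z₀ hz₀R).summable.tendsto_atTop_zero.norm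
  · have hy : ‖y‖ < R := by
      rw [Metric.eball_coe, Metric.mem_ball, dist_zero_right] at hy
      exact hy.trans hz₀R
    simpa [ofScalars_apply_eq, mul_comm] using ha y hy

theorem coeff_eq_of_hasSum {𝕜 : Type*} [NontriviallyNormedField 𝕜]
    {a b : ℕ → 𝕜} {f : 𝕜 → 𝕜} {R : ℝ} (hR : 0 < R)
    (ha : ∀ z : 𝕜, ‖z‖ < R → HasSum (fun k => a k * z ^ k) (f z))
    (hb : ∀ z : 𝕜, ‖z‖ < R → HasSum (fun k => b k * z ^ k) (f z)) : a = b :=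
  FormalMultilinearSeries.ofScalars_series_injective 𝕜 𝕜 <|
    (hasFPowerSeriesAt_ofScalars_of_hasSum hR ha).eq_formalMultilinearSeries
      (hasFPowerSeriesAt_ofScalars_of_hasSum hR hb)

theorem prod_range_two_mul_div_two {M : Type*} [CommMonoid M] (f : ℕ → M) (n : ℕ) :
    ∏ i ∈ range (2 * n), f (i / 2) = ∏ j ∈ range n, f j ^ 2 := by
  induction n with
  | zero => simp
  | succ n ih =>
    rw [mul_add_one, prod_range_succ, prod_range_succ, ih, prod_range_succ,
      show (2 * n + 1) / 2 = n by omega, show 2 * n / 2 = n by omega, sq, mul_assoc]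

theorem Real.tendsto_euler_sinh_prod (x : ℝ) :
    Tendsto (fun n : ℕ => x * ∏ j ∈ range n, (1 + x ^ 2 / (π ^ 2 * ((j : ℝ) + 1) ^ 2)))
      atTop (𝓝 (sinh x)) := by
  have hπ : (π : ℂ) ≠ 0 := Complex.ofReal_ne_zero.mpr pi_ne_zero
  have h := (Complex.continuous_im.tendsto _).comp
    (Complex.tendsto_euler_sin_prod (x * Complex.I / π))
  rw [mul_div_cancel₀ _ hπ, Complex.sin_mul_I, ← Complex.ofReal_sinh, Complex.mul_I_im,
    Complex.ofReal_re] at h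
  refine h.congr fun n => ?_
  have hfac (j : ℕ) : (1 : ℂ) - (x * Complex.I / π) ^ 2 / ((j : ℂ) + 1) ^ 2 =
      ((1 + x ^ 2 / (π ^ 2 * ((j : ℝ) + 1) ^ 2) : ℝ) : ℂ) := by
    push_cast
    field_simp
    rw [Complex.I_sq]
    ring
  simp only [Function.comp_apply, hfac, ← Complex.ofReal_prod]
  rw [mul_right_comm, ← Complex.ofReal_mul, Complex.mul_I_im, Complex.ofReal_re]

noncomputable def sinhFactor (x : ℝ) (j : ℕ) : ℝ := 1 + x ^ 2 / (π ^ 2 * ((j : ℝ) + 1) ^ 2)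

section sinhFactor

theorem one_le_sinhFactor (x : ℝ) (j : ℕ) : 1 ≤ sinhFactor x j :=
  le_add_of_nonneg_right (by positivity)

theorem one_lt_sinhFactor {x : ℝ} (hx : x ≠ 0) (j : ℕ) : 1 < sinhFactor x j :=
  lt_add_of_pos_right _ (by positivity)

theorem tendsto_prod_sinhFactor {x : ℝ} (hx : x ≠ 0) :
    Tendsto (fun n => ∏ j ∈ range n, sinhFactor x j) atTop (𝓝 (sinh x / x)) := by
  simpa [sinhFactor, mul_div_cancel_left₀ _ hx] using
    (Real.tendsto_euler_sinh_prod x).div_const x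

theorem prod_sinhFactor_le {x : ℝ} (hx : x ≠ 0) (n : ℕ) :
    ∏ j ∈ range n, sinhFactor x j ≤ sinh x / x := by
  refine Monotone.ge_of_tendsto (monotone_nat_of_le_succ fun n => ?_)
    (tendsto_prod_sinhFactor hx) n
  rw [prod_range_succ]
  exact le_mul_of_one_le_right (prod_nonneg fun j _ => zero_le_one.trans (one_le_sinhFactor x j))
    (one_le_sinhFactor x n)

theorem one_sub_mul_sinhFactor (x : ℝ) (j : ℕ) {z : ℝ} (hz : z ≤ 1) :
    1 - (1 - (sinhFactor x j)⁻¹) * z = sinhFactor (x * √(1 - z)) j / sinhFactor x j := by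
  have := one_le_sinhFactor x j
  rw [eq_div_iff (by positivity)]
  simp only [sinhFactor, mul_pow, sq_sqrt (sub_nonneg.2 hz)]
  field_simp
  ring

end sinhFactor

-- Indexing by `i / 2` lists every ratio twice, matching the squares in the product.
noncomputable def sinhGeomRatio (a : ℝ) (i : ℕ) : ℝ := 1 - (sinhFactor a (i / 2))⁻¹

noncomputable def sinhRatioCoeff (a : ℝ) (k : ℕ) : ℝ :=
  ⨆ n, geomProdCoeff (sinhGeomRatio a) n k

section sinhRatioCoeff

variable {a : ℝ}

theorem sinhGeomRatio_pos (ha : a ≠ 0) (i : ℕ) : 0 < sinhGeomRatio a i :=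
  sub_pos.2 (inv_lt_one_of_one_lt₀ (one_lt_sinhFactor ha _))

theorem sinhGeomRatio_lt_one (i : ℕ) : sinhGeomRatio a i < 1 :=
  sub_lt_self _ (inv_pos.2 (zero_lt_one.trans_le (one_le_sinhFactor a _)))

theorem prod_one_sub_sinhGeomRatio_mul_inv {z : ℝ} (hz : z ≤ 1) (n : ℕ) :
    ∏ i ∈ range (2 * n), (1 - sinhGeomRatio a i * z)⁻¹ =
      ((∏ j ∈ range n, sinhFactor a j) / ∏ j ∈ range n, sinhFactor (a * √(1 - z)) j) ^ 2 := by
  simp only [sinhGeomRatio]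
  rw [prod_range_two_mul_div_two (fun j => (1 - (1 - (sinhFactor a j)⁻¹) * z)⁻¹),
    ← prod_div_distrib, ← prod_pow]
  simp only [one_sub_mul_sinhFactor a _ hz, inv_div]

theorem hasSum_geomProdCoeff_sinhGeomRatio (ha : a ≠ 0) {z : ℝ} (hz : |z| ≤ 1) (n : ℕ) :
    HasSum (fun k => geomProdCoeff (sinhGeomRatio a) n k * z ^ k)
      (∏ i ∈ range n, (1 - sinhGeomRatio a i * z)⁻¹) :=
  hasSum_geomProdCoeff (fun i => (sinhGeomRatio_pos ha i).le) (fun i =>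
    (mul_le_of_le_one_right (sinhGeomRatio_pos ha i).le hz).trans_lt (sinhGeomRatio_lt_one i)) n

theorem geomProdCoeff_sinhGeomRatio_le (ha : a ≠ 0) (n k : ℕ) :
    geomProdCoeff (sinhGeomRatio a) n k ≤ (sinh a / a) ^ 2 := by
  have hs := fun i => (sinhGeomRatio_pos ha i).le
  calc geomProdCoeff (sinhGeomRatio a) n k
      ≤ geomProdCoeff (sinhGeomRatio a) (2 * n) k * 1 ^ k := by
        rw [one_pow, mul_one]
        exact geomProdCoeff_monotone hs k (by omega)
    _ ≤ ∏ i ∈ range (2 * n), (1 - sinhGeomRatio a i * 1)⁻¹ :=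
        le_hasSum (hasSum_geomProdCoeff_sinhGeomRatio ha (by simp) _) k fun j _ => by
          simpa using geomProdCoeff_nonneg hs _ j
    _ = (∏ j ∈ range n, sinhFactor a j) ^ 2 := by
        rw [prod_one_sub_sinhGeomRatio_mul_inv le_rfl, sub_self, Real.sqrt_zero, mul_zero]
        simp [sinhFactor]
    _ ≤ (sinh a / a) ^ 2 :=
        pow_le_pow_left₀ (prod_nonneg fun j _ => zero_le_one.trans (one_le_sinhFactor a j))
          (prod_sinhFactor_le ha n) 2

theorem tendsto_geomProdCoeff_sinhRatioCoeff (ha : a ≠ 0) (k : ℕ) :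
    Tendsto (fun n => geomProdCoeff (sinhGeomRatio a) n k) atTop (𝓝 (sinhRatioCoeff a k)) :=
  tendsto_atTop_ciSup (geomProdCoeff_monotone (fun i => (sinhGeomRatio_pos ha i).le) k)
    ⟨_, Set.forall_mem_range.2 fun n => geomProdCoeff_sinhGeomRatio_le ha n k⟩

theorem logConcave_sinhRatioCoeff (ha : a ≠ 0) : LogConcave (sinhRatioCoeff a) :=
  LogConcave.of_tendsto (Eventually.of_forall
    (logConcave_geomProdCoeff (sinhGeomRatio_pos ha))) (tendsto_geomProdCoeff_sinhRatioCoeff ha)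

theorem hasSum_sinhRatioCoeff (ha : a ≠ 0) {z : ℝ} (hz : |z| < 1) :
    HasSum (fun k => sinhRatioCoeff a k * z ^ k)
      ((sinh a / a / (sinh (a * √(1 - z)) / (a * √(1 - z)))) ^ 2) := by
  have hz₁ : z < 1 := (le_abs_self z).trans_lt hz
  have hu : a * √(1 - z) ≠ 0 := mul_ne_zero ha (Real.sqrt_ne_zero'.2 (by linarith))
  refine hasSum_pow_of_tendsto (l := atTop) (M := (sinh a / a) ^ 2)
    (q := fun n => geomProdCoeff (sinhGeomRatio a) (2 * n)) hz (fun n k => ?_) (fun k => ?_)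
    (fun n => hasSum_geomProdCoeff_sinhGeomRatio ha hz.le (2 * n)) ?_
  · rw [Real.norm_eq_abs,
      abs_of_nonneg (geomProdCoeff_nonneg (fun i => (sinhGeomRatio_pos ha i).le) _ _)]
    exact geomProdCoeff_sinhGeomRatio_le ha _ k
  · exact (tendsto_geomProdCoeff_sinhRatioCoeff ha k).comp
      (strictMono_mul_left_of_pos two_pos).tendsto_atTop
  · simp only [prod_one_sub_sinhGeomRatio_mul_inv hz₁.le]
    exact ((tendsto_prod_sinhFactor ha).div (tendsto_prod_sinhFactor hu)
      (div_ne_zero (sinh_ne_zero.2 hu) hu)).pow 2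

end sinhRatioCoeff

theorem sq_mul_one_sub_div_sinh_sq {r z : ℝ} (hr : r ≠ 0) (hz : z < 1) :
    r ^ 2 * (1 - z) / sinh (r * √(1 - z) / 2) ^ 2 = (r / sinh (r / 2)) ^ 2 *
      (sinh (r / 2) / (r / 2) / (sinh (r / 2 * √(1 - z)) / (r / 2 * √(1 - z)))) ^ 2 := by
  have hsqrt : √(1 - z) ≠ 0 := Real.sqrt_ne_zero'.2 (by linarith)
  have h₁ : sinh (r / 2) ≠ 0 := sinh_ne_zero.2 (by positivity)
  have h₂ : sinh (r / 2 * √(1 - z)) ≠ 0 := sinh_ne_zero.2 (by positivity)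
  rw [show r * √(1 - z) / 2 = r / 2 * √(1 - z) by ring]
  field_simp
  rw [sq_sqrt (by linarith)]

theorem stmt17 (r : ℝ) (hr : 0 < r) (d : ℕ → ℝ)
    (hd : ∀ z : ℝ, |z| < 1 → HasSum (fun k : ℕ => d k * z ^ k)
      (r ^ 2 * (1 - z) / (Real.sinh (r * Real.sqrt (1 - z) / 2)) ^ 2)) :
    ∀ k : ℕ, 1 ≤ k → d (k - 1) * d (k + 1) ≤ (d k) ^ 2 := by
  have ha : r / 2 ≠ 0 := by positivity
  have hd_eq : d = fun k => (r / sinh (r / 2)) ^ 2 * sinhRatioCoeff (r / 2) k := by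
    refine coeff_eq_of_hasSum one_pos hd fun z hz => ?_
    rw [Real.norm_eq_abs] at hz
    rw [sq_mul_one_sub_div_sinh_sq hr.ne' ((le_abs_self z).trans_lt hz)]
    simpa only [mul_assoc] using
      (hasSum_sinhRatioCoeff ha hz).mul_left ((r / sinh (r / 2)) ^ 2)
  intro k hk
  obtain ⟨m, rfl⟩ := Nat.exists_eq_add_of_le' hk
  rw [hd_eq]
  exact (logConcave_sinhRatioCoeff ha).const_mul _ m
end

section
/- If (u_k) and (v_k) are nonnegative logarithmically concave sequences (u_k^2 ≥ u_{k-1}u_{k+1} and v_k^2 ≥ v_{k-1}v_{k+1} with no internal zeros), then their convolution w_n = Σ_{k} u_k v_{n-k} is logarithmically concave. -/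
/-!
Log-concavity with no internal zeros upgrades to `u a * u (b + 1) ≤ u (a + 1) * u b` for all
`a ≤ b`, i.e. every `2 × 2` minor of the matrix with rows `u` and its shift is nonnegative, and the
same holds for `v`. Padding `u` by a zero and reversing `v`, the `2 × 2` matrix
`[[w (n+1), w (n+2)], [w n, w (n+1)]]` is the product of two such `2 × (n+3)` matrices, so by the
Cauchy–Binet formula its determinant `w (n+1) ^ 2 - w n * w (n+2)` is a sum of products of
nonnegative minors.
-/

open Finset

section BinetCauchy

variable {ι R : Type*}

theorem two_mul_sum_mul_sum_sub_eq_sum_sum_mul [CommRing R] (s : Finset ι) (f g p q : ι → R) :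
    2 * ((∑ k ∈ s, f k * p k) * (∑ k ∈ s, g k * q k) -
        (∑ k ∈ s, g k * p k) * (∑ k ∈ s, f k * q k)) =
      ∑ k ∈ s, ∑ l ∈ s, (f k * g l - g k * f l) * (p k * q l - p l * q k) := by
  have expand : ∀ k l, (f k * g l - g k * f l) * (p k * q l - p l * q k) =
      f k * p k * (g l * q l) + g k * q k * (f l * p l) -
        f k * q k * (g l * p l) - g k * p k * (f l * q l) := fun k l => by ring
  simp only [expand, sum_add_distrib, sum_sub_distrib, ← mul_sum, ← sum_mul]
  ring

theorem sum_mul_sum_le_sum_mul_sum_of_minors [LinearOrder ι] [CommRing R] [LinearOrder R]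
    [IsStrictOrderedRing R] (s : Finset ι) (f g p q : ι → R)
    (h : ∀ k ∈ s, ∀ l ∈ s, k < l → 0 ≤ (f k * g l - g k * f l) * (p k * q l - p l * q k)) :
    (∑ k ∈ s, g k * p k) * (∑ k ∈ s, f k * q k) ≤
      (∑ k ∈ s, f k * p k) * (∑ k ∈ s, g k * q k) := by
  have hsum : 0 ≤ ∑ k ∈ s, ∑ l ∈ s, (f k * g l - g k * f l) * (p k * q l - p l * q k) := by
    refine sum_nonneg fun k hk => sum_nonneg fun l hl => ?_
    rcases lt_trichotomy k l with hkl | rfl | hlk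
    · exact h k hk l hl hkl
    · simp
    · -- swapping `k` and `l` flips the sign of both minors
      linarith [h l hl k hk hlk]
  rw [← two_mul_sum_mul_sum_sub_eq_sum_sum_mul] at hsum
  linarith

end BinetCauchy

section LogConcave

variable {R : Type*} [CommRing R] [LinearOrder R] [IsStrictOrderedRing R]

theorem mul_succ_le_succ_mul_of_logConcave (u : ℕ → R) (hu0 : ∀ k, 0 ≤ u k)
    (hulc : ∀ k : ℕ, 1 ≤ k → u (k - 1) * u (k + 1) ≤ (u k) ^ 2)
    (hunz : ∀ i j k : ℕ, i ≤ j → j ≤ k → 0 < u i → 0 < u k → 0 < u j)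
    {a b : ℕ} (hab : a ≤ b) : u a * u (b + 1) ≤ u (a + 1) * u b := by
  induction b, hab using Nat.le_induction with
  | base => rw [mul_comm]
  | succ b hab ih =>
    rcases (hu0 a).eq_or_lt with ha | ha
    · rw [← ha, zero_mul]; exact mul_nonneg (hu0 _) (hu0 _)
    rcases (hu0 (b + 2)).eq_or_lt with hb2 | hb2
    · rw [← hb2, mul_zero]; exact mul_nonneg (hu0 _) (hu0 _)
    have hb1 : 0 < u (b + 1) := hunz a (b + 1) (b + 2) (by omega) (by omega) ha hb2
    have hlc : u b * u (b + 2) ≤ u (b + 1) ^ 2 := hulc (b + 1) le_add_self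
    refine le_of_mul_le_mul_right ?_ hb1
    calc u a * u (b + 2) * u (b + 1) = u a * u (b + 1) * u (b + 2) := by ring
      _ ≤ u (a + 1) * u b * u (b + 2) := mul_le_mul_of_nonneg_right ih (hu0 _)
      _ = u (a + 1) * (u b * u (b + 2)) := by ring
      _ ≤ u (a + 1) * u (b + 1) ^ 2 := mul_le_mul_of_nonneg_left hlc (hu0 _)
      _ = u (a + 1) * u (b + 1) * u (b + 1) := by ring

end LogConcave

section Convolution

variable {R : Type*}

def shiftSeq [Zero R] (u : ℕ → R) : ℕ → R
  | 0 => 0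
  | k + 1 => u k

@[simp] theorem shiftSeq_zero [Zero R] (u : ℕ → R) : shiftSeq u 0 = 0 := rfl

@[simp] theorem shiftSeq_succ [Zero R] (u : ℕ → R) (k : ℕ) : shiftSeq u (k + 1) = u k := rfl

theorem shiftSeq_nonneg [Preorder R] [Zero R] {u : ℕ → R} (hu0 : ∀ k, 0 ≤ u k) :
    ∀ k, 0 ≤ shiftSeq u k
  | 0 => le_rfl
  | k + 1 => hu0 k

def seqConv [Semiring R] (u v : ℕ → R) (n : ℕ) : R :=
  ∑ k ∈ range (n + 1), u k * v (n - k)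

theorem seqConv_shiftSeq_left [Semiring R] (u v : ℕ → R) (n : ℕ) :
    seqConv (shiftSeq u) v (n + 1) = seqConv u v n := by
  simp [seqConv, sum_range_succ' _ (n + 1)]

theorem seqConv_shiftSeq_right [Semiring R] (u v : ℕ → R) (n : ℕ) :
    seqConv u (shiftSeq v) (n + 1) = seqConv u v n := by
  rw [seqConv, sum_range_succ, Nat.sub_self, shiftSeq_zero, mul_zero, add_zero]
  refine sum_congr rfl fun k hk => ?_
  rw [Nat.succ_sub (Nat.lt_succ_iff.mp (mem_range.mp hk)), shiftSeq_succ]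

theorem shiftSeq_mul_le_mul_shiftSeq [Semiring R] [PartialOrder R] [IsOrderedRing R]
    {u : ℕ → R} (hu0 : ∀ k, 0 ≤ u k)
    (hu : ∀ a b : ℕ, a ≤ b → u a * u (b + 1) ≤ u (a + 1) * u b) {k l : ℕ} (hkl : k ≤ l) :
    shiftSeq u k * u l ≤ u k * shiftSeq u l := by
  cases k with
  | zero => simpa using mul_nonneg (hu0 0) (shiftSeq_nonneg hu0 l)
  | succ a =>
    obtain ⟨b, rfl⟩ : ∃ b, l = b + 1 := ⟨l - 1, by omega⟩
    exact hu a b (by omega)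

theorem seqConv_mul_seqConv_le_sq [CommRing R] [LinearOrder R] [IsStrictOrderedRing R]
    {u v : ℕ → R} (hu0 : ∀ k, 0 ≤ u k) (hv0 : ∀ k, 0 ≤ v k)
    (hu : ∀ a b : ℕ, a ≤ b → u a * u (b + 1) ≤ u (a + 1) * u b)
    (hv : ∀ a b : ℕ, a ≤ b → v a * v (b + 1) ≤ v (a + 1) * v b) (n : ℕ) :
    seqConv u v n * seqConv u v (n + 2) ≤ seqConv u v (n + 1) ^ 2 := by
  have hminors : ∀ k ∈ range (n + 3), ∀ l ∈ range (n + 3), k < l →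
      0 ≤ (u k * shiftSeq u l - shiftSeq u k * u l) *
        (shiftSeq v (n + 2 - k) * v (n + 2 - l) - shiftSeq v (n + 2 - l) * v (n + 2 - k)) := by
    intro k _ l _ hkl
    have hv' := shiftSeq_mul_le_mul_shiftSeq hv0 hv (show n + 2 - l ≤ n + 2 - k by omega)
    have hu' := shiftSeq_mul_le_mul_shiftSeq hu0 hu hkl.le
    exact mul_nonneg (by linarith) (by linarith)
  have h := sum_mul_sum_le_sum_mul_sum_of_minors (range (n + 3)) u (shiftSeq u)
    (fun k => shiftSeq v (n + 2 - k)) (fun k => v (n + 2 - k)) hminors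
  change seqConv (shiftSeq u) (shiftSeq v) (n + 2) * seqConv u v (n + 2) ≤
    seqConv u (shiftSeq v) (n + 2) * seqConv (shiftSeq u) v (n + 2) at h
  rwa [seqConv_shiftSeq_left, seqConv_shiftSeq_right, seqConv_shiftSeq_right,
    seqConv_shiftSeq_left, ← sq] at h

end Convolution

theorem stmt18 (u v : ℕ → ℝ)
    (hu0 : ∀ k, 0 ≤ u k) (hv0 : ∀ k, 0 ≤ v k)
    (hulc : ∀ k : ℕ, 1 ≤ k → u (k - 1) * u (k + 1) ≤ (u k) ^ 2)
    (hvlc : ∀ k : ℕ, 1 ≤ k → v (k - 1) * v (k + 1) ≤ (v k) ^ 2)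
    (hunz : ∀ i j k : ℕ, i ≤ j → j ≤ k → 0 < u i → 0 < u k → 0 < u j)
    (hvnz : ∀ i j k : ℕ, i ≤ j → j ≤ k → 0 < v i → 0 < v k → 0 < v j)
    (w : ℕ → ℝ)
    (hw : ∀ n : ℕ, w n = ∑ k ∈ Finset.range (n + 1), u k * v (n - k)) :
    ∀ n : ℕ, 1 ≤ n → w (n - 1) * w (n + 1) ≤ (w n) ^ 2 := by
  obtain rfl : w = seqConv u v := funext hw
  rintro (_ | n) hn
  · omega
  exact seqConv_mul_seqConv_le_sq hu0 hv0
    (fun _ _ => mul_succ_le_succ_mul_of_logConcave u hu0 hulc hunz)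
    (fun _ _ => mul_succ_le_succ_mul_of_logConcave v hv0 hvlc hvnz) n
end
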